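/- For every a ≥ 4 the following closed formulas hold for partitions of n = a+4 with first part a: η_{(a,4)} = 2·(−1)^{a+1} − (a+1)·η_{(a−1,3)}; η_{(a,3,1)} = (−1)^a + (a+2)·(D_{a−1} + 2·(D_{a−2} + D_{a−3})); η_{(a,2,2)} = (−1)^{a+1}·(a+3) + (a+2)·(a+1)·D_{a−2}; η_{(a,2,1,1)} = (a+3)·((−1)^{a+1} + a·D_{a−2}); and η_{(a,1,1,1,1)} = D_a + 4·D_{a−1}. -/

import Mathlib

/-- Derangement numbers: `D 0 = 1`, `D (m+1) = (m+1) * D m + (-1)^(m+1)`. -/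
def derange : ℕ → ℤ
  | 0 => 1
  | n + 1 => (n + 1 : ℤ) * derange n + (-1) ^ (n + 1)

/-- Subtract one from every part and discard the parts that become zero
(deleting the first column of the Ferrers diagram). -/
def strip (l : List ℕ) : List ℕ := (l.map (· - 1)).filter (fun x => 0 < x)

lemma strip_measure (l : List ℕ) : (strip l).sum + (strip l).length ≤ l.sum := by
  induction l with
  | nil => simp [strip]
  | cons x t ih =>
      simp only [strip, List.map_cons, List.filter_cons] at ih ⊢
      by_cases hx : 0 < x - 1 <;> simp [hx] <;> omega

/-- The eigenvalues of the derangement graph, defined by Renteln's recurrence: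
`η ∅ = 1` and `η λ = (-1)^h (η (λ-ĥ) + (-1)^{λ₁} h η (λ-ĉ))`, where
`h = λ₁ + r - 1` is the hook size, `λ-ĥ = strip (tail λ)` removes the hook,
and `λ-ĉ = strip λ` removes the first column. -/
def eta : List ℕ → ℤ
  | [] => 1
  | a :: t =>
      (-1) ^ (a + t.length) *
        (eta (strip t) + (-1) ^ a * ((a : ℤ) + t.length) * eta (strip (a :: t)))
  termination_by l => l.sum + l.length
  decreasing_by
  · have h1 := strip_measure t
    simp only [List.sum_cons, List.length_cons]
    omega
  · have h1 := strip_measure (a :: t)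
    simp only [List.sum_cons, List.length_cons] at h1 ⊢
    omega

/-- `l` is (the list of parts of) a partition of `n`: weakly decreasing,
all parts positive, summing to `n`. -/
def IsPartition (n : ℕ) (l : List ℕ) : Prop :=
  l.Pairwise (· ≥ ·) ∧ (∀ x ∈ l, 0 < x) ∧ l.sum = n

/-- The hook partition `(a, 1^(n-a))` of `n`. -/
def hookP (n a : ℕ) : List ℕ := a :: List.replicate (n - a) 1

/-!
Each formula is one step of Renteln's recurrence. Removing the hook of `(a, μ)`, `|μ| = 4`, leaves
a partition of `4 - ℓ(μ)` into parts `≤ 3`, and removing the first column leaves `(a - 1, μ - ĉ)`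
with `|μ - ĉ| ≤ 3`. For `μ ≠ (4)` the latter eigenvalues (`η_{(m)} = D_m`, `η_{(m,1)}`,
`η_{(m,1,1)}`, `η_{(m,2)}`) are one or two further steps from single rows. Once the parity of
`a` has fixed the signs, what is left is ring arithmetic with `D_{m+2} = (m+1)(D_{m+1} + D_m)`.
-/

lemma derange_succ (n : ℕ) : derange (n + 1) = (n + 1) * derange n + (-1) ^ (n + 1) := rfl

lemma derange_zero : derange 0 = 1 := rfl

lemma derange_one : derange 1 = 0 := rfl

lemma derange_add_two (n : ℕ) : derange (n + 2) = (n + 1) * (derange (n + 1) + derange n) := by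
  rw [derange_succ (n + 1), derange_succ n]
  push_cast
  ring

lemma strip_nil : strip [] = [] := rfl

lemma strip_cons_one (t : List ℕ) : strip (1 :: t) = strip t := by
  simp [strip]

lemma strip_cons_add_two (n : ℕ) (t : List ℕ) : strip ((n + 2) :: t) = (n + 1) :: strip t := by
  simp [strip]

lemma eta_nil : eta [] = 1 := by rw [eta]

lemma eta_cons (a : ℕ) (t : List ℕ) : eta (a :: t) =
    (-1) ^ (a + t.length) *
      (eta (strip t) + (-1) ^ a * ((a : ℤ) + t.length) * eta (strip (a :: t))) := by
  rw [eta]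

lemma eta_singleton : ∀ n : ℕ, eta [n] = derange n
  | 0 => by simp [eta_cons, eta_nil, strip, derange]
  | 1 => by simp [eta_cons, eta_nil, strip, derange]
  | n + 2 => by
    rw [eta_cons, strip_cons_add_two, strip_nil, eta_singleton (n + 1), eta_nil,
      derange_succ (n + 1)]
    rcases neg_one_pow_eq_or ℤ n with h | h <;>
      simp only [List.length_nil, add_zero, Nat.cast_add, Nat.cast_ofNat, pow_succ, h] <;> ring

lemma eta_one : ∀ n : ℕ, eta [n + 1, 1] = -(derange (n + 1) + derange n)
  | 0 => by simp [eta_cons, eta_nil, strip, derange]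
  | n + 1 => by
    rw [eta_cons]
    simp only [strip_cons_add_two, strip_cons_one, strip_nil, List.length_cons, List.length_nil,
      Nat.reduceAdd, Nat.cast_add, Nat.cast_one, eta_nil, eta_singleton, derange_succ (n + 1)]
    rcases neg_one_pow_eq_or ℤ n with h | h <;> simp only [pow_succ, h] <;> ring

lemma eta_one_one : ∀ n : ℕ, eta [n + 1, 1, 1] = (-1) ^ (n + 1) + (n + 3) * derange n
  | 0 => by simp [eta_cons, eta_nil, strip, derange]
  | n + 1 => by
    rw [eta_cons]
    simp only [strip_cons_add_two, strip_cons_one, strip_nil, List.length_cons, List.length_nil,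
      Nat.reduceAdd, Nat.cast_add, Nat.cast_one, eta_nil, eta_singleton]
    rcases neg_one_pow_eq_or ℤ n with h | h <;> simp only [pow_succ, h] <;> ring

lemma eta_two (n : ℕ) : eta [n + 2, 2] = (n + 3) * (derange (n + 1) + derange n) := by
  rw [eta_cons]
  simp only [strip_cons_add_two, strip_nil, List.length_cons, List.length_nil,
    Nat.reduceAdd, Nat.cast_add, Nat.cast_ofNat, eta_singleton, derange_one, eta_one]
  rcases neg_one_pow_eq_or ℤ n with h | h <;> simp only [pow_succ, h] <;> ring

lemma eta_four {a : ℕ} (ha : 2 ≤ a) :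
    eta [a, 4] = 2 * (-1) ^ (a + 1) - ((a : ℤ) + 1) * eta [a - 1, 3] := by
  obtain ⟨n, rfl⟩ := Nat.exists_eq_add_of_le' ha
  rw [eta_cons]
  simp only [strip_cons_add_two, strip_nil, List.length_cons, List.length_nil,
    Nat.reduceAdd, Nat.add_one_sub_one, Nat.cast_add, Nat.cast_ofNat, eta_singleton,
    show derange 3 = 2 from rfl]
  rcases neg_one_pow_eq_or ℤ n with h | h <;> simp only [pow_succ, h] <;> ring

lemma eta_three_one {a : ℕ} (ha : 3 ≤ a) :
    eta [a, 3, 1] =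
      (-1) ^ a + ((a : ℤ) + 2) * (derange (a - 1) + 2 * (derange (a - 2) + derange (a - 3))) := by
  obtain ⟨n, rfl⟩ := Nat.exists_eq_add_of_le' ha
  rw [eta_cons]
  simp only [strip_cons_add_two, strip_cons_one, strip_nil, List.length_cons, List.length_nil,
    add_assoc, Nat.reduceAdd, Nat.reduceSubDiff, Nat.cast_add, Nat.cast_ofNat, eta_singleton,
    show derange 2 = 1 from rfl, eta_two, derange_add_two n]
  rcases neg_one_pow_eq_or ℤ n with h | h <;> simp only [pow_succ, h] <;> ring

lemma eta_two_two {a : ℕ} (ha : 2 ≤ a) :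
    eta [a, 2, 2] =
      (-1) ^ (a + 1) * ((a : ℤ) + 3) + ((a : ℤ) + 2) * ((a : ℤ) + 1) * derange (a - 2) := by
  obtain ⟨n, rfl⟩ := Nat.exists_eq_add_of_le' ha
  rw [eta_cons]
  simp only [strip_cons_add_two, strip_nil, List.length_cons, List.length_nil,
    add_assoc, Nat.reduceAdd, Nat.add_sub_cancel, Nat.cast_add, Nat.cast_ofNat, eta_one, eta_one_one,
    derange_zero, derange_one]
  rcases neg_one_pow_eq_or ℤ n with h | h <;> simp only [pow_succ, h] <;> ring

lemma eta_two_one_one {a : ℕ} (ha : 2 ≤ a) :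
    eta [a, 2, 1, 1] = ((a : ℤ) + 3) * ((-1) ^ (a + 1) + (a : ℤ) * derange (a - 2)) := by
  obtain ⟨n, rfl⟩ := Nat.exists_eq_add_of_le' ha
  rw [eta_cons]
  simp only [strip_cons_add_two, strip_cons_one, strip_nil, List.length_cons, List.length_nil,
    add_assoc, Nat.reduceAdd, Nat.add_sub_cancel, Nat.cast_add, Nat.cast_ofNat, eta_singleton, eta_one,
    derange_one, derange_succ n]
  rcases neg_one_pow_eq_or ℤ n with h | h <;> simp only [pow_succ, h] <;> ring

lemma eta_one_one_one_one : ∀ a : ℕ, eta [a, 1, 1, 1, 1] = derange a + 4 * derange (a - 1)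
  | 0 => by simp [eta_cons, eta_nil, strip, derange]
  | 1 => by simp [eta_cons, eta_nil, strip, derange]
  | n + 2 => by
    rw [eta_cons]
    simp only [strip_cons_add_two, strip_cons_one, strip_nil, List.length_cons, List.length_nil,
      Nat.reduceAdd, Nat.add_one_sub_one, Nat.cast_add, Nat.cast_ofNat, eta_nil, eta_singleton,
      derange_succ (n + 1)]
    rcases neg_one_pow_eq_or ℤ n with h | h <;> simp only [pow_succ, h] <;> ring

/-- Closed formulas for the eigenvalues of partitions of `n = a + 4` with first part
`a ≥ 4`. -/
theorem eta_n_minus_four_values (a : ℕ) (ha : 4 ≤ a) :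
    eta [a, 4] = 2 * (-1) ^ (a + 1) - ((a : ℤ) + 1) * eta [a - 1, 3] ∧
    eta [a, 3, 1] =
      (-1) ^ a + ((a : ℤ) + 2) * (derange (a - 1) + 2 * (derange (a - 2) + derange (a - 3))) ∧
    eta [a, 2, 2] = (-1) ^ (a + 1) * ((a : ℤ) + 3) + ((a : ℤ) + 2) * ((a : ℤ) + 1) * derange (a - 2) ∧
    eta [a, 2, 1, 1] = ((a : ℤ) + 3) * ((-1) ^ (a + 1) + (a : ℤ) * derange (a - 2)) ∧
    eta [a, 1, 1, 1, 1] = derange a + 4 * derange (a - 1) :=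
  ⟨eta_four (by omega), eta_three_one (by omega), eta_two_two (by omega),
    eta_two_one_one (by omega), eta_one_one_one_one a⟩
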